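/- With T as in the Gallant et al. reduction (C ∪ ⋃ A_i as defined), every common superstring of T has length at least 2m + 3n. Consequently, G has a Hamiltonian path from s to t if and only if T has a common superstring of length exactly 2m + 3n. -/

import Mathlib

/-- The alphabet {‡, #, $} ∪ V ∪ W, with all symbols pairwise distinct. -/
abbrev Gam : Type := ℕ ⊕ ℕ ⊕ Fin 3

/-- node symbol v_i -/
def vv (i : ℕ) : Gam := Sum.inl i
/-- auxiliary symbol w_i -/
def ww (i : ℕ) : Gam := Sum.inr (Sum.inl i)
def dag : Gam := Sum.inr (Sum.inr 0)
def hash : Gam := Sum.inr (Sum.inr 1)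
def dollar : Gam := Sum.inr (Sum.inr 2)

/-!
Count adjacent pairs of letters. A common superstring `Q` contains the `m` pairs
`v_{c(i,j)} w_i` and, writing `C_i = x_i # y_i`, the `n` pairs `x_i #` and the `n` pairs `# y_i`;
all of them are distinct. Charge an occurrence of a pair to its first position when its first
letter is a node letter or `‡`, and to its second position when its second letter is neither.
No position is charged twice, and the pairs `v_{c(i,j)} w_i`, `x_i #` are charged at both ends,
so `|Q| ≥ (m + n) + (m + 2n)`.

If `|Q| = 2m + 3n`, every position is charged exactly once: each of these pairs occurs exactly
once, every node letter is followed by some `w_i` or `#`, and every `w_i` is preceded by a node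
letter or `#`. Hence the letters following `C_i` form the loop `w_i v_{c(i,j)} w_i v_{c(i,j+1)} ⋯`
once around the children of `i`, which then runs into the gadget `C_k` of a child `k`, further to
the right. So `i ↦ k` is injective and increases positions; its orbit from `s` is a Hamiltonian
path. Conversely, the loops strung together along a Hamiltonian path form a superstring of
length `2m + 3n`.
-/

namespace List

variable {α : Type*}

theorem infix_triple_iff {l : List α} {a b c : α} :
    [a, b, c] <:+: l ↔ ∃ x, l[x]? = some a ∧ l[x + 1]? = some b ∧ l[x + 2]? = some c := by
  rw [infix_iff_getElem?]
  constructor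
  · rintro ⟨x, -, h⟩
    exact ⟨x, by simpa using h 0, by simpa [add_comm] using h 1, by simpa [add_comm] using h 2⟩
  · rintro ⟨x, ha, hb, hc⟩
    have hlen := (getElem?_eq_some_iff.mp hc).1
    refine ⟨x, by simp; omega, fun i hi => ?_⟩
    simp only [length_cons, length_nil] at hi
    interval_cases i <;> simpa [add_comm]

theorem getElem_append_getElem_succ_infix_flatten {L : List (List α)} {k : ℕ}
    (hk : k + 1 < L.length) : L[k] ++ L[k + 1] <:+: L.flatten := by
  refine ⟨(L.take k).flatten, (L.drop (k + 2)).flatten, ?_⟩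
  have hdrop : L.drop k = L[k] :: L[k + 1] :: L.drop (k + 2) := by
    rw [drop_eq_getElem_cons (by omega), drop_eq_getElem_cons hk]
  conv_rhs => rw [← take_append_drop k L, flatten_append, hdrop, flatten_cons, flatten_cons]
  simp only [append_assoc]

end List

section PairCounting

variable {α : Type*}

def List.pairAt (l : List α) (x : ℕ) : Option α × Option α := (l[x]?, l[x + 1]?)

namespace PairCover

variable {l : List α} {P : α → Bool}

def fstPositions (l : List α) (P : α → Bool) : Finset ℕ :=
  (Finset.range l.length).filter fun x => l[x]?.any P

-- indexed by the first position `x` of the pair, which is charged to `x + 1`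
def sndPositions (l : List α) (P : α → Bool) : Finset ℕ :=
  (Finset.range l.length).filter fun x => l[x + 1]?.any fun b => !P b

theorem mem_fstPositions {x : ℕ} {a : α} (hx : l[x]? = some a) (ha : P a = true) :
    x ∈ fstPositions l P := by
  simp only [fstPositions, Finset.mem_filter, Finset.mem_range, hx]
  exact ⟨(List.getElem?_eq_some_iff.mp hx).1, ha⟩

theorem mem_sndPositions {x : ℕ} {b : α} (hx : l[x + 1]? = some b) (hb : P b = false) :
    x ∈ sndPositions l P := by
  simp only [sndPositions, Finset.mem_filter, Finset.mem_range, hx]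
  exact ⟨by have := (List.getElem?_eq_some_iff.mp hx).1; omega, by simp [hb]⟩

def liftPair (q : α × α) : Option α × Option α := (some q.1, some q.2)

theorem liftPair_injective : Function.Injective (liftPair (α := α)) :=
  Option.some_injective α |>.prodMap (Option.some_injective α)

theorem disjoint_fstPositions_map_sndPositions :
    Disjoint (fstPositions l P) ((sndPositions l P).map ⟨(· + 1), add_left_injective 1⟩) := by
  refine Finset.disjoint_left.mpr fun x hx hx' => ?_
  obtain ⟨y, hy, rfl⟩ := Finset.mem_map.mp hx'
  simp only [fstPositions, sndPositions, Finset.mem_filter] at hx hy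
  cases h : l[y + 1]? <;> simp_all

theorem fstPositions_union_map_sndPositions_subset :
    fstPositions l P ∪ (sndPositions l P).map ⟨(· + 1), add_left_injective 1⟩ ⊆
      Finset.range l.length := by
  refine Finset.union_subset (Finset.filter_subset _ _) fun x hx => ?_
  obtain ⟨y, hy, rfl⟩ := Finset.mem_map.mp hx
  simp only [sndPositions, Finset.mem_filter, Finset.mem_range] at hy ⊢
  cases h : l[y + 1]? with
  | none => simp [h] at hy
  | some b => exact (List.getElem?_eq_some_iff.mp h).1

theorem card_fstPositions_add_card_sndPositions_le :
    (fstPositions l P).card + (sndPositions l P).card ≤ l.length := by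
  simpa [Finset.card_union_of_disjoint disjoint_fstPositions_map_sndPositions] using
    Finset.card_le_card (fstPositions_union_map_sndPositions_subset (l := l) (P := P))

end PairCover

variable [DecidableEq α]

structure PairCover (l : List α) (P : α → Bool) (R₁ R₂ : Finset (α × α)) : Prop where
  fst_of_mem : ∀ q ∈ R₁, P q.1 = true
  snd_of_mem : ∀ q ∈ R₂, P q.2 = false
  occurs : ∀ q ∈ R₁ ∪ R₂, ∃ x, l.pairAt x = (some q.1, some q.2)

namespace PairCover

variable {l : List α} {P : α → Bool} {R₁ R₂ : Finset (α × α)}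


theorem image_liftPair_fst_subset (h : PairCover l P R₁ R₂) :
    R₁.image liftPair ⊆ (fstPositions l P).image l.pairAt := by
  intro z hz
  obtain ⟨q, hq, rfl⟩ := Finset.mem_image.mp hz
  obtain ⟨x, hx⟩ := h.occurs q (Finset.mem_union_left _ hq)
  simp only [List.pairAt, Prod.mk.injEq] at hx
  exact Finset.mem_image.mpr
    ⟨x, mem_fstPositions hx.1 (h.fst_of_mem q hq), by simp [List.pairAt, liftPair, hx]⟩

theorem image_liftPair_snd_subset (h : PairCover l P R₁ R₂) :
    R₂.image liftPair ⊆ (sndPositions l P).image l.pairAt := by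
  intro z hz
  obtain ⟨q, hq, rfl⟩ := Finset.mem_image.mp hz
  obtain ⟨x, hx⟩ := h.occurs q (Finset.mem_union_right _ hq)
  simp only [List.pairAt, Prod.mk.injEq] at hx
  exact Finset.mem_image.mpr
    ⟨x, mem_sndPositions hx.2 (h.snd_of_mem q hq), by simp [List.pairAt, liftPair, hx]⟩

theorem card_add_card_le (h : PairCover l P R₁ R₂) : R₁.card + R₂.card ≤ l.length := by
  have h₁ := (Finset.card_le_card h.image_liftPair_fst_subset).trans Finset.card_image_le
  have h₂ := (Finset.card_le_card h.image_liftPair_snd_subset).trans Finset.card_image_le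
  rw [Finset.card_image_of_injective _ liftPair_injective] at h₁ h₂
  linarith [card_fstPositions_add_card_sndPositions_le (l := l) (P := P)]

theorem positions_of_tight (h : PairCover l P R₁ R₂) (heq : R₁.card + R₂.card = l.length) :
    ((fstPositions l P).image l.pairAt = R₁.image liftPair ∧
      Set.InjOn l.pairAt (fstPositions l P)) ∧
    ((sndPositions l P).image l.pairAt = R₂.image liftPair ∧
      Set.InjOn l.pairAt (sndPositions l P)) ∧
    fstPositions l P ∪ (sndPositions l P).map ⟨(· + 1), add_left_injective 1⟩ =
      Finset.range l.length := by
  have h₁ := Finset.card_le_card h.image_liftPair_fst_subset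
  have h₂ := Finset.card_le_card h.image_liftPair_snd_subset
  have i₁ := Finset.card_image_le (s := fstPositions l P) (f := l.pairAt)
  have i₂ := Finset.card_image_le (s := sndPositions l P) (f := l.pairAt)
  have hsum := card_fstPositions_add_card_sndPositions_le (l := l) (P := P)
  rw [Finset.card_image_of_injective _ liftPair_injective] at h₁ h₂
  refine ⟨⟨?_, ?_⟩, ⟨?_, ?_⟩, ?_⟩
  · exact (Finset.eq_of_subset_of_card_le h.image_liftPair_fst_subset
      (by rw [Finset.card_image_of_injective _ liftPair_injective]; omega)).symm
  · exact Finset.card_image_iff.mp (by omega)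
  · exact (Finset.eq_of_subset_of_card_le h.image_liftPair_snd_subset
      (by rw [Finset.card_image_of_injective _ liftPair_injective]; omega)).symm
  · exact Finset.card_image_iff.mp (by omega)
  · exact Finset.eq_of_subset_of_card_le fstPositions_union_map_sndPositions_subset
      (by rw [Finset.card_union_of_disjoint disjoint_fstPositions_map_sndPositions,
        Finset.card_map]; simp; omega)

theorem exists_snd_of_tight (h : PairCover l P R₁ R₂) (heq : R₁.card + R₂.card = l.length)
    {x : ℕ} {a : α} (hx : l[x]? = some a) (ha : P a = true) :
    ∃ b, l[x + 1]? = some b ∧ (a, b) ∈ R₁ := by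
  have hmem : l.pairAt x ∈ (fstPositions l P).image l.pairAt :=
    Finset.mem_image_of_mem _ (mem_fstPositions hx ha)
  rw [(h.positions_of_tight heq).1.1] at hmem
  obtain ⟨q, hq, hxq⟩ := Finset.mem_image.mp hmem
  simp only [liftPair, List.pairAt, hx, Prod.mk.injEq, Option.some_inj] at hxq
  exact ⟨q.2, hxq.2.symm, by rwa [← hxq.1]⟩

theorem exists_fst_of_tight (h : PairCover l P R₁ R₂) (heq : R₁.card + R₂.card = l.length)
    {x : ℕ} {b : α} (hx : l[x]? = some b) (hb : P b = false) :
    ∃ y a, x = y + 1 ∧ l[y]? = some a ∧ (a, b) ∈ R₂ := by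
  have hx' : x ∈ Finset.range l.length := by simp [(List.getElem?_eq_some_iff.mp hx).1]
  rw [← (h.positions_of_tight heq).2.2] at hx'
  rcases Finset.mem_union.mp hx' with hF | hG
  · simp [fstPositions, hx, hb] at hF
  obtain ⟨y, hy, rfl⟩ := Finset.mem_map.mp hG
  have hmem : l.pairAt y ∈ R₂.image liftPair :=
    (h.positions_of_tight heq).2.1.1 ▸ Finset.mem_image_of_mem _ hy
  obtain ⟨q, hq, hyq⟩ := Finset.mem_image.mp hmem
  simp only [liftPair, List.pairAt, Prod.mk.injEq] at hyq
  refine ⟨y, q.1, rfl, hyq.1.symm, ?_⟩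
  have hqb : q.2 = b := Option.some_inj.mp (hyq.2.trans (by simpa using hx))
  rwa [← hqb]

theorem eq_of_tight (h : PairCover l P R₁ R₂) (heq : R₁.card + R₂.card = l.length)
    {a b : α} (hab : (a, b) ∈ R₁ ∪ R₂) {x y : ℕ} (hx : l[x]? = some a) (hx' : l[x + 1]? = some b)
    (hy : l[y]? = some a) (hy' : l[y + 1]? = some b) : x = y := by
  have hxy : l.pairAt x = l.pairAt y := by simp [List.pairAt, hx, hx', hy, hy']
  rcases Finset.mem_union.mp hab with hab | hab
  · have hP := h.fst_of_mem _ hab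
    exact (h.positions_of_tight heq).1.2 (mem_fstPositions hx hP) (mem_fstPositions hy hP) hxy
  · have hP := h.snd_of_mem _ hab
    exact (h.positions_of_tight heq).2.1.2 (mem_sndPositions hx' hP) (mem_sndPositions hy' hP)
      hxy

end PairCover

end PairCounting

theorem iterate_zero_bijective_of_potential {N : ℕ} {f g : ℕ → ℕ}
    (hmaps : ∀ i < N, f i ≠ 0 ∧ f i ≤ N) (hinj : Set.InjOn f (Set.Iio N))
    (hg : ∀ i < N, g i < g (f i)) :
    (∀ k < N, f^[k] 0 < N) ∧ f^[N] 0 = N ∧ ∀ x < N + 1, ∃! k, k < N + 1 ∧ f^[k] 0 = x := by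
  set p : ℕ → ℕ := fun k => f^[k] 0
  have hsucc : ∀ k, p (k + 1) = f (p k) := fun k => Function.iterate_succ_apply' f k 0
  have hsurj : ∀ x, x ≠ 0 → x ≤ N → ∃ y < N, f y = x := by
    intro x hx0 hxN
    obtain ⟨y, hy, hyx⟩ := Finset.surj_on_of_inj_on_of_card_le (s := Finset.range N)
      (t := Finset.Icc 1 N) (fun a _ => f a)
      (fun a ha => by have := hmaps a (by simpa using ha); simp; omega)
      (fun a b ha hb hab => hinj (by simpa using ha) (by simpa using hb) hab) (by simp) x
      (by simp; omega)
    exact ⟨y, by simpa using hy, hyx.symm⟩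
  -- induction on `g x`: the predecessor of `x ≠ 0` under `f` has smaller potential
  have hreach : ∀ x ≤ N, ∃ k, p k = x ∧ ∀ r < k, p r < N := by
    intro x
    induction hgx : g x using Nat.strong_induction_on generalizing x with
    | _ v ih =>
      intro hx
      rcases Nat.eq_zero_or_pos x with rfl | hx0
      · exact ⟨0, rfl, by simp⟩
      obtain ⟨y, hy, rfl⟩ := hsurj x hx0.ne' hx
      obtain ⟨k, hky, hk⟩ := ih (g y) (hgx ▸ hg _ hy) y rfl hy.le
      refine ⟨k + 1, by rw [hsucc, hky], fun r hr => ?_⟩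
      rcases Nat.lt_succ_iff_lt_or_eq.mp hr with hr | rfl
      exacts [hk r hr, hky ▸ hy]
  obtain ⟨K, hK, hKlt⟩ := hreach N le_rfl
  have hmono : ∀ r s, r < s → s ≤ K → g (p r) < g (p s) := by
    intro r s hrs hsK
    induction s, hrs using Nat.le_induction with
    | base => rw [hsucc]; exact hg _ (hKlt r (by omega))
    | succ s hrs ih => rw [hsucc]; exact (ih (by omega)).trans (hg _ (hKlt s (by omega)))
  have hinjp : Set.InjOn p (Set.Iic K) := by
    intro r hr s hs hrs
    by_contra hne
    rcases Nat.lt_or_gt_of_ne hne with h | h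
    · exact (hmono r s h hs).ne (congrArg g hrs)
    · exact (hmono s r h hr).ne' (congrArg g hrs)
  have hreachK : ∀ x ≤ N, ∃ k ≤ K, p k = x := by
    intro x hx
    obtain ⟨k, rfl, hk⟩ := hreach x hx
    exact ⟨k, by by_contra h; exact (hk K (by omega)).ne hK, rfl⟩
  have hKN : K = N := by
    apply le_antisymm
    · have := Finset.card_le_card_of_injOn p (s := Finset.range (K + 1))
        (t := Finset.range (N + 1))
        (fun k hk => by
          have hk : k ≤ K := by simpa [Nat.lt_succ_iff] using hk
          rcases hk.lt_or_eq with hk | rfl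
          · simpa using (hKlt k hk).le.trans_lt N.lt_succ_self
          · simp [hK])
        (fun r hr s hs => hinjp (by simpa [Nat.lt_succ_iff] using hr)
          (by simpa [Nat.lt_succ_iff] using hs))
      simpa using this
    · have hsub : Finset.range (N + 1) ⊆ (Finset.range (K + 1)).image p := by
        intro x hx
        obtain ⟨k, hk, rfl⟩ := hreachK x (by simpa [Nat.lt_succ_iff] using hx)
        exact Finset.mem_image_of_mem _ (by simpa [Nat.lt_succ_iff] using hk)
      have := (Finset.card_le_card hsub).trans Finset.card_image_le
      simpa using this
  subst hKN
  refine ⟨hKlt, hK, fun x hx => ?_⟩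
  obtain ⟨k, hk, rfl⟩ := hreachK x (by omega)
  exact ⟨k, ⟨by omega, rfl⟩, fun k' hk' =>
    hinjp (show k' ≤ K by omega) (show k ≤ K from hk) hk'.2⟩

theorem Function.Periodic.exists_add_eq {α : Type*} {f : ℕ → α} {d : ℕ}
    (hf : Function.Periodic f d) {e j : ℕ} (he : e < d) (hj : j < d) :
    ∃ r < d, f (e + r) = f j ∧ f (e + r + 1) = f (j + 1) := by
  by_cases h : e ≤ j
  · exact ⟨j - e, by omega, by rw [Nat.add_sub_cancel' h], by rw [Nat.add_sub_cancel' h]⟩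
  · refine ⟨j + d - e, by omega, ?_, ?_⟩
    · rw [show e + (j + d - e) = j + d by omega, hf]
    · rw [show e + (j + d - e) + 1 = j + 1 + d by omega, hf]

section Gadgets

open Finset

@[simp] theorem vv_inj {a b : ℕ} : vv a = vv b ↔ a = b := by simp [vv]

@[simp] theorem ww_inj {a b : ℕ} : ww a = ww b ↔ a = b := by simp [ww]

variable (n : ℕ) (δ : ℕ → ℕ) (c : ℕ → ℕ → ℕ)

/-- The node gadget `C_i` is `[nodeHead i, #, nodeTail n i]`. -/
def nodeHead (i : ℕ) : Gam := if i = 0 then dag else vv i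

def nodeTail (i : ℕ) : Gam := if i = n - 1 then dollar else ww i

/-- `node`, `loop` and `link` are the strings `C_i`, `A_{i,j}` and `B_{i,j}`. -/
structure IsGadgetSuperstring (Q : List Gam) : Prop where
  node : ∀ i < n, [nodeHead i, hash, nodeTail n i] <:+: Q
  loop : ∀ i < n - 1, ∀ j < δ i, [ww i, vv (c i j), ww i] <:+: Q
  link : ∀ i < n - 1, ∀ j < δ i, [vv (c i j), ww i, vv (c i (j + 1))] <:+: Q

structure IsTightSuperstring (Q : List Gam) : Prop extends IsGadgetSuperstring n δ c Q where
  length_eq : Q.length = 2 * ∑ i ∈ range (n - 1), δ i + 3 * n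

def ChildrenInjective : Prop := ∀ i < n - 1, ∀ j < δ i, ∀ j' < δ i, c i j = c i j' → j = j'

structure IsHamiltonianPath (p : ℕ → ℕ) : Prop where
  existsUnique : ∀ x < n, ∃! k, k < n ∧ p k = x
  map_zero : p 0 = 0
  map_last : p (n - 1) = n - 1
  adj : ∀ k < n - 1, ∃ j < δ (p k), c (p k) j = p (k + 1)

def edges : Finset (Σ _ : ℕ, ℕ) := (range (n - 1)).sigma fun i => range (δ i)

def edgePairs : Finset (Gam × Gam) := (edges n δ).image fun e => (vv (c e.1 e.2), ww e.1)

def headPairs : Finset (Gam × Gam) := (range n).image fun i => (nodeHead i, hash)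

def tailPairs : Finset (Gam × Gam) := (range n).image fun i => (hash, nodeTail n i)

-- the node letters `v_i` and `‡`
def isHead : Gam → Bool
  | Sum.inl _ => true
  | Sum.inr (Sum.inr 0) => true
  | _ => false

variable {n δ c}

theorem nodeHead_of_ne_zero {i : ℕ} (hi : i ≠ 0) : nodeHead i = vv i := if_neg hi

theorem nodeTail_of_ne {i : ℕ} (hi : i ≠ n - 1) : nodeTail n i = ww i := if_neg hi

theorem nodeHead_injective : Function.Injective nodeHead := by
  intro i i' h
  unfold nodeHead at h
  split_ifs at h <;> simp_all [vv, dag]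

theorem nodeTail_injective : Function.Injective (nodeTail n) := by
  intro i i' h
  unfold nodeTail at h
  split_ifs at h <;> simp_all [ww, dollar]

theorem isHead_nodeHead (i : ℕ) : isHead (nodeHead i) = true := by
  unfold nodeHead; split_ifs <;> rfl

theorem isHead_nodeTail (i : ℕ) : isHead (nodeTail n i) = false := by
  unfold nodeTail; split_ifs <;> rfl

theorem card_edgePairs (hinj : ChildrenInjective n δ c) :
    (edgePairs n δ c).card = ∑ i ∈ range (n - 1), δ i := by
  rw [edgePairs, card_image_of_injOn, edges, card_sigma]
  · simp
  rintro ⟨i, j⟩ he ⟨i', j'⟩ he' h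
  simp only [edges, coe_sigma, Set.mem_sigma_iff, coe_range, Set.mem_Iio] at he he'
  simp only [Prod.mk.injEq, vv_inj, ww_inj] at h
  obtain ⟨hc, rfl⟩ := h
  rw [hinj i he.1 j he.2 j' he'.2 hc]

theorem card_pairs (hinj : ChildrenInjective n δ c) :
    (edgePairs n δ c ∪ headPairs n).card + (edgePairs n δ c ∪ headPairs n ∪ tailPairs n).card =
      2 * ∑ i ∈ range (n - 1), δ i + 3 * n := by
  have hhead : (headPairs n).card = n := by
    rw [headPairs, card_image_of_injective _ fun i i' h => nodeHead_injective (by simpa using h)]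
    simp
  have htail : (tailPairs n).card = n := by
    rw [tailPairs, card_image_of_injective _ fun i i' h => nodeTail_injective (by simpa using h)]
    simp
  have hdisj₁ : Disjoint (edgePairs n δ c) (headPairs n) := by
    simp [disjoint_left, edgePairs, headPairs, ww, _root_.hash]
  have hdisj₂ : Disjoint (edgePairs n δ c ∪ headPairs n) (tailPairs n) := by
    simp only [disjoint_left, mem_union, edgePairs, headPairs, tailPairs, mem_image]
    rintro _ (⟨e, -, rfl⟩ | ⟨i, -, rfl⟩) ⟨i', -, h⟩
    · simp [vv, _root_.hash] at h
    · have := isHead_nodeHead i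
      simp only [Prod.mk.injEq] at h
      rw [← h.1] at this
      exact absurd this (by decide)
  rw [card_union_of_disjoint hdisj₂, card_union_of_disjoint hdisj₁, card_edgePairs hinj, hhead,
    htail]
  ring

theorem IsGadgetSuperstring.pairCover {Q : List Gam} (hQ : IsGadgetSuperstring n δ c Q) :
    PairCover Q isHead (edgePairs n δ c ∪ headPairs n)
      (edgePairs n δ c ∪ headPairs n ∪ tailPairs n) where
  fst_of_mem q hq := by
    simp only [mem_union, edgePairs, headPairs, mem_image] at hq
    rcases hq with ⟨e, -, rfl⟩ | ⟨i, -, rfl⟩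
    exacts [rfl, isHead_nodeHead i]
  snd_of_mem q hq := by
    simp only [mem_union, edgePairs, headPairs, tailPairs, mem_image] at hq
    rcases hq with (⟨e, -, rfl⟩ | ⟨i, -, rfl⟩) | ⟨i, -, rfl⟩
    exacts [rfl, rfl, isHead_nodeTail i]
  occurs q hq := by
    rw [union_eq_right.mpr subset_union_left] at hq
    simp only [mem_union, edgePairs, headPairs, tailPairs, edges, mem_image, mem_sigma,
      mem_range] at hq
    rcases hq with (⟨⟨i, j⟩, ⟨hi, hj⟩, rfl⟩ | ⟨i, hi, rfl⟩) | ⟨i, hi, rfl⟩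
    · obtain ⟨x, h0, h1, -⟩ := List.infix_triple_iff.mp (hQ.link i hi j hj)
      exact ⟨x, by simp [List.pairAt, h0, h1]⟩
    · obtain ⟨x, h0, h1, -⟩ := List.infix_triple_iff.mp (hQ.node i hi)
      exact ⟨x, by simp [List.pairAt, h0, h1]⟩
    · obtain ⟨x, -, h1, h2⟩ := List.infix_triple_iff.mp (hQ.node i hi)
      exact ⟨x + 1, by simp [List.pairAt, h1, h2]⟩

theorem IsGadgetSuperstring.length_ge {Q : List Gam} (hQ : IsGadgetSuperstring n δ c Q)
    (hinj : ChildrenInjective n δ c) :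
    2 * ∑ i ∈ range (n - 1), δ i + 3 * n ≤ Q.length :=
  card_pairs hinj ▸ hQ.pairCover.card_add_card_le

theorem mem_edgePairs (hδ : ∀ i < n - 1, 0 < δ i)
    (hper : ∀ i < n - 1, Function.Periodic (c i) (δ i)) {i : ℕ} (hi : i < n - 1) (j : ℕ) :
    (vv (c i j), ww i) ∈ edgePairs n δ c := by
  refine mem_image.mpr ⟨⟨i, j % δ i⟩, ?_, by simp [(hper i hi).map_mod_nat]⟩
  simp [edges, hi, Nat.mod_lt _ (hδ i hi)]

theorem IsGadgetSuperstring.exists_edge {Q : List Gam} (hQ : IsGadgetSuperstring n δ c Q)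
    (hδ : ∀ i < n - 1, 0 < δ i) (hper : ∀ i < n - 1, Function.Periodic (c i) (δ i))
    {i : ℕ} (hi : i < n - 1) (j : ℕ) :
    ∃ x, Q[x]? = some (vv (c i j)) ∧ Q[x + 1]? = some (ww i) ∧
      Q[x + 2]? = some (vv (c i (j + 1))) := by
  obtain ⟨x, h0, h1, h2⟩ :=
    List.infix_triple_iff.mp (hQ.link i hi (j % δ i) (Nat.mod_lt _ (hδ i hi)))
  refine ⟨x, by rwa [(hper i hi).map_mod_nat] at h0, h1, ?_⟩
  have hmod : (j % δ i + 1) % δ i = (j + 1) % δ i := by simp [Nat.add_mod]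
  rwa [← (hper i hi).map_mod_nat, hmod, (hper i hi).map_mod_nat] at h2

namespace IsTightSuperstring

variable {Q : List Gam}

theorem eq_of_occurs (hT : IsTightSuperstring n δ c Q) (hinj : ChildrenInjective n δ c)
    {a b : Gam} (hab : (a, b) ∈ edgePairs n δ c ∪ headPairs n ∪ tailPairs n) {x y : ℕ}
    (hx : Q[x]? = some a) (hx' : Q[x + 1]? = some b) (hy : Q[y]? = some a)
    (hy' : Q[y + 1]? = some b) : x = y :=
  hT.pairCover.eq_of_tight ((card_pairs hinj).trans hT.length_eq.symm) (mem_union_right _ hab)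
    hx hx' hy hy'

theorem exists_next_of_vv (hT : IsTightSuperstring n δ c Q) (hinj : ChildrenInjective n δ c)
    {x a : ℕ} (hx : Q[x]? = some (vv a)) :
    (∃ i < n - 1, ∃ j < δ i, a = c i j ∧ Q[x + 1]? = some (ww i)) ∨
      (a ≠ 0 ∧ a < n ∧ Q[x + 1]? = some hash) := by
  obtain ⟨b, hb, hab⟩ :=
    hT.pairCover.exists_snd_of_tight ((card_pairs hinj).trans hT.length_eq.symm) hx rfl
  simp only [mem_union, edgePairs, headPairs, edges, mem_image, mem_sigma, mem_range,
    Prod.mk.injEq] at hab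
  rcases hab with ⟨⟨i, j⟩, ⟨hi, hj⟩, hc, rfl⟩ | ⟨k, hk, hka, rfl⟩
  · exact Or.inl ⟨i, hi, j, hj, (vv_inj.mp hc).symm, hb⟩
  · by_cases hk0 : k = 0
    · simp [nodeHead, hk0, dag, vv] at hka
    · rw [nodeHead_of_ne_zero hk0, vv_inj] at hka
      exact Or.inr ⟨hka ▸ hk0, hka ▸ hk, hb⟩

theorem exists_prev_of_ww (hT : IsTightSuperstring n δ c Q) (hinj : ChildrenInjective n δ c)
    {x i : ℕ} (hx : Q[x]? = some (ww i)) :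
    ∃ y, x = y + 1 ∧ (Q[y]? = some hash ∨ ∃ j, Q[y]? = some (vv (c i j))) := by
  obtain ⟨y, a, rfl, hy, hab⟩ :=
    hT.pairCover.exists_fst_of_tight ((card_pairs hinj).trans hT.length_eq.symm) hx rfl
  refine ⟨y, rfl, ?_⟩
  simp only [mem_union, edgePairs, headPairs, tailPairs, mem_image, Prod.mk.injEq] at hab
  rcases hab with (⟨⟨i', j⟩, -, rfl, hi⟩ | ⟨k, -, -, h⟩) | ⟨k, -, rfl, -⟩
  · exact Or.inr ⟨j, by rwa [← ww_inj.mp hi]⟩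
  · simp [ww, _root_.hash] at h
  · exact Or.inl hy

theorem getElem?_add_two_of_edge (hT : IsTightSuperstring n δ c Q) (hinj : ChildrenInjective n δ c)
    (hδ : ∀ i < n - 1, 0 < δ i) (hper : ∀ i < n - 1, Function.Periodic (c i) (δ i))
    {i x : ℕ} (hi : i < n - 1) {j : ℕ} (hx : Q[x]? = some (vv (c i j)))
    (hx' : Q[x + 1]? = some (ww i)) : Q[x + 2]? = some (vv (c i (j + 1))) := by
  obtain ⟨y, h0, h1, h2⟩ := hT.exists_edge hδ hper hi j
  rwa [hT.eq_of_occurs hinj (mem_union_left _ (mem_union_left _ (mem_edgePairs hδ hper hi j)))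
    hx hx' h0 h1]

theorem exists_prev_of_edge (hT : IsTightSuperstring n δ c Q) (hinj : ChildrenInjective n δ c)
    (hδ : ∀ i < n - 1, 0 < δ i) (hper : ∀ i < n - 1, Function.Periodic (c i) (δ i))
    {i x : ℕ} (hi : i < n - 1) {j : ℕ} (hx : Q[x]? = some (vv (c i j)))
    (hx' : Q[x + 1]? = some (ww i)) : ∃ y, x = y + 1 ∧ Q[y]? = some (ww i) := by
  obtain ⟨y, h0, h1, h2⟩ :=
    List.infix_triple_iff.mp (hT.loop i hi (j % δ i) (Nat.mod_lt _ (hδ i hi)))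
  rw [(hper i hi).map_mod_nat] at h1
  exact ⟨y, hT.eq_of_occurs hinj (mem_union_left _ (mem_union_left _ (mem_edgePairs hδ hper hi j)))
    hx hx' h1 h2, h0⟩

theorem exists_next_node (hT : IsTightSuperstring n δ c Q) (hinj : ChildrenInjective n δ c)
    (hδ : ∀ i < n - 1, 0 < δ i) (hper : ∀ i < n - 1, Function.Periodic (c i) (δ i))
    {pC : ℕ → ℕ} (hpC : ∀ k < n, Q[pC k]? = some (nodeHead k) ∧ Q[pC k + 1]? = some hash ∧
      Q[pC k + 2]? = some (nodeTail n k))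
    {i : ℕ} (hi : i < n - 1) :
    ∃ j < δ i, c i j ≠ 0 ∧ c i j < n ∧ pC i < pC (c i j) ∧
      ∃ y, pC (c i j) = y + 1 ∧ Q[y]? = some (ww i) := by
  classical
  have hmem : ∀ j, (vv (c i j), ww i) ∈ edgePairs n δ c ∪ headPairs n ∪ tailPairs n :=
    fun j => mem_union_left _ (mem_union_left _ (mem_edgePairs hδ hper hi j))
  have hE : ∃ x, ∃ j < δ i, Q[x]? = some (vv (c i j)) ∧ Q[x + 1]? = some (ww i) := by
    obtain ⟨x, h0, h1, -⟩ := hT.exists_edge hδ hper hi 0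
    exact ⟨x, 0, hδ i hi, h0, h1⟩
  obtain ⟨j₀, hj₀, h₀, h₀'⟩ := Nat.find_spec hE
  set x₀ := Nat.find hE
  have hmin : ∀ x j, Q[x]? = some (vv (c i j)) → Q[x + 1]? = some (ww i) → x₀ ≤ x :=
    fun x j h h' => Nat.find_min' hE ⟨j % δ i, Nat.mod_lt _ (hδ i hi),
      by rwa [(hper i hi).map_mod_nat], h'⟩
  -- the leftmost pair `v_{c(i,j)} w_i` is preceded by `# w_i`, the end of `C_i`
  have hx₀ : x₀ = pC i + 3 := by
    obtain ⟨y, hy, hyw⟩ := hT.exists_prev_of_edge hinj hδ hper hi h₀ h₀'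
    obtain ⟨z, rfl, hz | ⟨j', hz⟩⟩ := hT.exists_prev_of_ww hinj hyw
    · have htail : (hash, ww i) ∈ edgePairs n δ c ∪ headPairs n ∪ tailPairs n :=
        mem_union_right _ (mem_image.mpr ⟨i, by simp; omega, by rw [nodeTail_of_ne hi.ne]⟩)
      obtain ⟨-, h1, h2⟩ := hpC i (by omega)
      rw [nodeTail_of_ne hi.ne] at h2
      have := hT.eq_of_occurs hinj htail hz hyw h1 h2
      omega
    · have := hmin z j' hz hyw
      omega
  obtain ⟨x₁, h₁, h₁', -⟩ := hT.exists_edge hδ hper hi (j₀ + δ i - 1)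
  have hx₀₁ := hmin x₁ _ h₁ h₁'
  have h₂ : Q[x₁ + 2]? = some (vv (c i j₀)) := by
    have := hT.getElem?_add_two_of_edge hinj hδ hper hi h₁ h₁'
    rwa [show j₀ + δ i - 1 + 1 = j₀ + δ i by have := hδ i hi; omega, hper i hi] at this
  -- one round later the loop is back at `v_{c(i,j₀)}`; since `v_{c(i,j₀)} w_i` already occurs
  -- at `x₀`, this letter begins a gadget `C_k`
  rcases hT.exists_next_of_vv hinj h₂ with ⟨i', hi', j', -, hc, h₃⟩ | ⟨hk0, hkn, h₃⟩
  · exfalso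
    rw [hc] at h₂
    obtain ⟨y, hy, hyw⟩ := hT.exists_prev_of_edge hinj hδ hper hi' h₂ h₃
    obtain rfl : i' = i := by
      rw [show y = x₁ + 1 by omega, h₁'] at hyw
      exact (ww_inj.mp (Option.some_inj.mp hyw)).symm
    rw [← hc] at h₂
    have := hT.eq_of_occurs hinj (hmem j₀) h₂ h₃ h₀ h₀'
    omega
  · obtain ⟨hk, hk', -⟩ := hpC _ hkn
    rw [nodeHead_of_ne_zero hk0] at hk
    have := hT.eq_of_occurs hinj (mem_union_left _ (mem_union_right _
      (mem_image.mpr ⟨c i j₀, mem_range.mpr hkn, by rw [nodeHead_of_ne_zero hk0]⟩))) h₂ h₃ hk hk'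
    exact ⟨j₀, hj₀, hk0, hkn, by omega, x₁ + 1, by omega, h₁'⟩

theorem exists_hamiltonianPath {Q : List Gam}
    (hT : IsTightSuperstring n δ c Q) (hn : n ≠ 0) (hinj : ChildrenInjective n δ c)
    (hδ : ∀ i < n - 1, 0 < δ i) (hper : ∀ i < n - 1, Function.Periodic (c i) (δ i)) :
    ∃ p, IsHamiltonianPath n δ c p := by
  choose! pC hpC using fun k (hk : k < n) => List.infix_triple_iff.mp (hT.node k hk)
  choose! jn hjn using fun i (hi : i < n - 1) => hT.exists_next_node hinj hδ hper hpC hi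
  set f : ℕ → ℕ := fun i => c i (jn i)
  have hf_inj : Set.InjOn f (Set.Iio (n - 1)) := by
    intro i hi i' hi' h
    obtain ⟨-, -, -, -, y, hy, hyw⟩ := hjn i hi
    obtain ⟨-, -, -, -, y', hy', hyw'⟩ := hjn i' hi'
    obtain rfl : y = y' := by simp only [f] at h; rw [h] at hy; omega
    exact ww_inj.mp (Option.some_inj.mp (hyw.symm.trans hyw'))
  obtain ⟨hlt, hlast, huniq⟩ := iterate_zero_bijective_of_potential (g := pC)
    (fun i hi => ⟨(hjn i hi).2.1, by have := (hjn i hi).2.2.1; omega⟩) hf_inj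
    (fun i hi => (hjn i hi).2.2.2.1)
  refine ⟨fun k => f^[k] 0, ⟨by rwa [Nat.sub_add_cancel (Nat.one_le_iff_ne_zero.mpr hn)] at huniq,
    rfl, hlast, fun k hk => ⟨jn _, (hjn _ (hlt k hk)).1, ?_⟩⟩⟩
  exact (Function.iterate_succ_apply' f k 0).symm

end IsTightSuperstring

end Gadgets

section Construction

open Finset

variable {n : ℕ} {δ : ℕ → ℕ} {c : ℕ → ℕ → ℕ} {p e : ℕ → ℕ}

namespace IsHamiltonianPath

theorem map_lt (hp : IsHamiltonianPath n δ c p) {k : ℕ} (hk : k < n) : p k < n := by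
  have hsub : range n ⊆ (range n).image p := fun x hx => by
    obtain ⟨k, ⟨hk, rfl⟩, -⟩ := hp.existsUnique x (mem_range.mp hx)
    exact mem_image_of_mem p (mem_range.mpr hk)
  have himage := eq_of_subset_of_card_le hsub card_image_le
  have hmem := mem_image_of_mem p (mem_range.mpr hk)
  rw [← himage] at hmem
  exact mem_range.mp hmem

theorem eq_of_map_eq (hp : IsHamiltonianPath n δ c p) {k k' : ℕ} (hk : k < n) (hk' : k' < n)
    (h : p k = p k') : k = k' :=
  (hp.existsUnique _ (hp.map_lt hk)).unique ⟨hk, rfl⟩ ⟨hk', h.symm⟩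

theorem map_lt_pred (hp : IsHamiltonianPath n δ c p) {k : ℕ} (hk : k < n - 1) : p k < n - 1 := by
  have hlt := hp.map_lt (k := k) (by omega)
  have hne : p k ≠ n - 1 := fun h => by
    have := hp.eq_of_map_eq (by omega) (by omega) (h.trans hp.map_last.symm)
    omega
  omega

theorem exists_eq_of_lt_pred (hp : IsHamiltonianPath n δ c p) {i : ℕ} (hi : i < n - 1) :
    ∃ k < n - 1, p k = i := by
  obtain ⟨k, ⟨hk, rfl⟩, -⟩ := hp.existsUnique i (by omega)
  refine ⟨k, ?_, rfl⟩
  by_contra h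
  rw [show k = n - 1 by omega, hp.map_last] at hi
  omega

theorem sum_comp (hp : IsHamiltonianPath n δ c p) (g : ℕ → ℕ) :
    ∑ k ∈ range (n - 1), g (p k) = ∑ i ∈ range (n - 1), g i := by
  refine sum_nbij p (fun k hk => mem_range.mpr (hp.map_lt_pred (mem_range.mp hk)))
    (fun k hk k' hk' h => hp.eq_of_map_eq ?_ ?_ h) (fun i hi => ?_) (fun _ _ => rfl)
  · simp only [coe_range, Set.mem_Iio] at hk; omega
  · simp only [coe_range, Set.mem_Iio] at hk'; omega
  · obtain ⟨k, hk, rfl⟩ := hp.exists_eq_of_lt_pred (by simpa using hi)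
    exact ⟨k, by simpa using hk, rfl⟩

end IsHamiltonianPath

variable (δ c) in
def loopWord (i e : ℕ) : List Gam :=
  ((List.range (δ i + 1)).map fun r => [ww i, vv (c i (e + r))]).flatten

theorem length_loopWord (i e : ℕ) : (loopWord δ c i e).length = 2 * δ i + 2 := by
  simp [loopWord, List.length_flatten, Function.comp_def, List.sum_replicate]
  ring

theorem loopWord_infix {i e r : ℕ} (hr : r < δ i) :
    [ww i, vv (c i (e + r)), ww i] <:+: loopWord δ c i e ∧
      [vv (c i (e + r)), ww i, vv (c i (e + r + 1))] <:+: loopWord δ c i e := by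
  have h := List.getElem_append_getElem_succ_infix_flatten
    (L := (List.range (δ i + 1)).map fun r => [ww i, vv (c i (e + r))]) (k := r) (by simpa)
  simp only [List.getElem_map, List.getElem_range, List.cons_append, List.nil_append,
    ← add_assoc] at h
  exact ⟨(List.infix_append [] _ [vv (c i (e + r + 1))]).trans h,
    (List.infix_append [ww i] _ []).trans h⟩

theorem exists_loopWord_eq_append (i e : ℕ) :
    ∃ u, loopWord δ c i e = u ++ [vv (c i (e + δ i))] :=
  ⟨((List.range (δ i)).map fun r => [ww i, vv (c i (e + r))]).flatten ++ [ww i], by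
    simp [loopWord, List.range_succ]⟩

theorem exists_loopWord_eq_cons (i e : ℕ) : ∃ u, loopWord δ c i e = ww i :: u :=
  ⟨vv (c i e) :: ((List.range (δ i)).map fun r => [ww i, vv (c i (e + (r + 1)))]).flatten, by
    simp [loopWord, List.range_succ_eq_map, Function.comp_def]⟩

variable (n δ c) in
def pathPiece (p e : ℕ → ℕ) (k : ℕ) : List Gam :=
  if k = 0 then [dag] else if k = n then [hash, dollar]
  else hash :: loopWord δ c (p (k - 1)) (e (k - 1))

variable (n δ c) in
/-- `‡ · # loop(p 0) · # loop(p 1) ⋯ # loop(p (n - 2)) · # $`, where the loop of `p k` starts and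
ends at the child `p (k + 1)`. -/
def pathWord (p e : ℕ → ℕ) : List Gam :=
  ((List.range (n + 1)).map (pathPiece n δ c p e)).flatten

theorem length_pathWord (hn : n ≠ 0) :
    (pathWord n δ c p e).length = 2 * ∑ k ∈ range (n - 1), δ (p k) + 3 * n := by
  obtain ⟨N, rfl⟩ := Nat.exists_eq_add_one_of_ne_zero hn
  have hsum : ((List.range (N + 1 + 1)).map fun k => (pathPiece (N + 1) δ c p e k).length).sum =
      ∑ k ∈ range (N + 1 + 1), (pathPiece (N + 1) δ c p e k).length := by
    simp [Finset.sum_eq_multiset_sum, Multiset.range]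
  have hmid : ∀ k ∈ range N, (pathPiece (N + 1) δ c p e (k + 1)).length = 2 * δ (p k) + 3 := by
    intro k hk
    simp [pathPiece, show k ≠ N by simp at hk; omega, length_loopWord]
  simp only [pathWord, List.length_flatten, List.map_map, Function.comp_def, hsum]
  rw [sum_range_succ, sum_range_succ', sum_congr rfl hmid, sum_add_distrib, ← mul_sum]
  simp [pathPiece]
  ring

theorem pathPiece_append_infix {k : ℕ} (hk : k < n) :
    pathPiece n δ c p e k ++ pathPiece n δ c p e (k + 1) <:+: pathWord n δ c p e := by
  have h := List.getElem_append_getElem_succ_infix_flatten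
    (L := (List.range (n + 1)).map (pathPiece n δ c p e)) (k := k) (by simpa)
  simp only [List.getElem_map, List.getElem_range] at h
  exact h

theorem loopWord_infix_pathWord {k : ℕ} (hk : k < n - 1) :
    loopWord δ c (p k) (e k) <:+: pathWord n δ c p e := by
  have hpiece : pathPiece n δ c p e (k + 1) = hash :: loopWord δ c (p k) (e k) := by
    simp [pathPiece, show k + 1 ≠ n by omega]
  have h := pathPiece_append_infix (n := n) (δ := δ) (c := c) (p := p) (e := e) (k := k + 1)
    (by omega)
  rw [hpiece] at h
  exact List.IsInfix.trans ⟨[hash], _, rfl⟩ h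

namespace IsHamiltonianPath

theorem exists_pathPiece_eq_append (hp : IsHamiltonianPath n δ c p)
    (hper : ∀ i < n - 1, Function.Periodic (c i) (δ i))
    (he : ∀ k < n - 1, c (p k) (e k) = p (k + 1)) {k : ℕ} (hk : k < n) :
    ∃ u, pathPiece n δ c p e k = u ++ [nodeHead (p k)] := by
  rcases k with _ | k
  · exact ⟨[], by simp [pathPiece, hp.map_zero, nodeHead]⟩
  obtain ⟨u, hu⟩ := exists_loopWord_eq_append (δ := δ) (c := c) (p k) (e k)
  have hlast : c (p k) (e k + δ (p k)) = p (k + 1) := by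
    rw [hper _ (hp.map_lt_pred (by omega)), he k (by omega)]
  have hne : p (k + 1) ≠ 0 := fun h => by
    have := hp.eq_of_map_eq hk (by omega) (h.trans hp.map_zero.symm)
    omega
  exact ⟨hash :: u, by
    simp [pathPiece, show k + 1 ≠ n by omega, hu, hlast, nodeHead_of_ne_zero hne]⟩

theorem exists_pathPiece_succ_eq_cons (hp : IsHamiltonianPath n δ c p) {k : ℕ} (hk : k < n) :
    ∃ u, pathPiece n δ c p e (k + 1) = hash :: nodeTail n (p k) :: u := by
  by_cases hkn : k + 1 = n
  · refine ⟨[], ?_⟩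
    rw [show k = n - 1 by omega, hp.map_last]
    simp [pathPiece, nodeTail]
    omega
  obtain ⟨u, hu⟩ := exists_loopWord_eq_cons (δ := δ) (c := c) (p k) (e k)
  exact ⟨u, by simp [pathPiece, hkn, hu, nodeTail_of_ne (hp.map_lt_pred (k := k) (by omega)).ne]⟩

theorem exists_superstring (hp : IsHamiltonianPath n δ c p) (hn : n ≠ 0)
    (hper : ∀ i < n - 1, Function.Periodic (c i) (δ i)) :
    ∃ Q : List Gam, Q.length = 2 * ∑ i ∈ range (n - 1), δ i + 3 * n ∧
      IsGadgetSuperstring n δ c Q := by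
  choose! e he using hp.adj
  have hwindow : ∀ i < n - 1, ∀ j < δ i, [ww i, vv (c i j), ww i] <:+: pathWord n δ c p e ∧
      [vv (c i j), ww i, vv (c i (j + 1))] <:+: pathWord n δ c p e := by
    intro i hi j hj
    obtain ⟨k, hk, rfl⟩ := hp.exists_eq_of_lt_pred hi
    obtain ⟨r, hr, hr₀, hr₁⟩ := (hper _ hi).exists_add_eq (he k hk).1 hj
    obtain ⟨hA, hB⟩ := loopWord_infix (c := c) (e := e k) hr
    rw [hr₀] at hA hB
    rw [hr₁] at hB
    exact ⟨hA.trans (loopWord_infix_pathWord hk), hB.trans (loopWord_infix_pathWord hk)⟩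
  refine ⟨pathWord n δ c p e, by rw [length_pathWord hn, hp.sum_comp],
    ⟨fun i hi => ?_, fun i hi j hj => (hwindow i hi j hj).1,
      fun i hi j hj => (hwindow i hi j hj).2⟩⟩
  obtain ⟨k, ⟨hk, rfl⟩, -⟩ := hp.existsUnique i hi
  obtain ⟨u, hu⟩ := hp.exists_pathPiece_eq_append hper (fun k hk => (he k hk).2) hk
  obtain ⟨u', hu'⟩ := hp.exists_pathPiece_succ_eq_cons (e := e) hk
  refine List.IsInfix.trans ⟨u, u', ?_⟩ (pathPiece_append_infix hk)
  rw [hu, hu']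
  simp

end IsHamiltonianPath

end Construction

theorem stmt_14_general (n m : ℕ) (hn : 2 ≤ n)
    (δ : ℕ → ℕ) (c : ℕ → ℕ → ℕ)
    -- every node except t has out-degree greater than 1
    (hδ : ∀ i < n - 1, 2 ≤ δ i)
    -- child indices are cyclic modulo δ(i)
    (hper : ∀ i < n - 1, ∀ j, c i (j + δ i) = c i j)
    -- the children of a node are pairwise distinct
    (hinj : ∀ i < n - 1, ∀ j < δ i, ∀ j' < δ i, c i j = c i j' → j = j')
    -- m is the number of edges
    (hm : m = ∑ i ∈ Finset.range (n - 1), δ i) :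
    let A : ℕ → ℕ → List Gam := fun i j => [ww i, vv (c i j), ww i]
    let B : ℕ → ℕ → List Gam := fun i j => [vv (c i j), ww i, vv (c i (j + 1))]
    let Cs : ℕ → List Gam := fun i =>
      if i = 0 then [dag, hash, ww 0]
      else if i = n - 1 then [vv i, hash, dollar]
      else [vv i, hash, ww i]
    let T : Set (List Gam) :=
      {S | (∃ i < n, S = Cs i) ∨ (∃ i < n - 1, ∃ j < δ i, S = A i j ∨ S = B i j)}
    -- every common superstring of T has length at least 2m + 3n
    (∀ Q : List Gam, (∀ S ∈ T, S <:+: Q) → 2 * m + 3 * n ≤ Q.length) ∧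
    -- Hamiltonian path from s to t exists iff a superstring of length 2m + 3n exists
    ((∃ p : ℕ → ℕ, (∀ x < n, ∃! k, k < n ∧ p k = x) ∧ p 0 = 0 ∧ p (n - 1) = n - 1 ∧
        ∀ k < n - 1, ∃ j < δ (p k), c (p k) j = p (k + 1)) ↔
      (∃ Q : List Gam, Q.length = 2 * m + 3 * n ∧ ∀ S ∈ T, S <:+: Q)) := by
  intro A B Cs T
  have hCs : ∀ i, Cs i = [nodeHead i, hash, nodeTail n i] := fun i => by
    simp only [Cs, nodeHead, nodeTail]
    split_ifs <;> simp_all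
    omega
  have hT : ∀ Q, (∀ S ∈ T, S <:+: Q) ↔ IsGadgetSuperstring n δ c Q := fun Q =>
    ⟨fun h => ⟨fun i hi => hCs i ▸ h _ (Or.inl ⟨i, hi, rfl⟩),
      fun i hi j hj => h _ (Or.inr ⟨i, hi, j, hj, Or.inl rfl⟩),
      fun i hi j hj => h _ (Or.inr ⟨i, hi, j, hj, Or.inr rfl⟩)⟩,
    fun hQ S hS => by
      rcases hS with ⟨i, hi, rfl⟩ | ⟨i, hi, j, hj, rfl | rfl⟩
      exacts [hCs i ▸ hQ.node i hi, hQ.loop i hi j hj, hQ.link i hi j hj]⟩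
  have hδ₀ : ∀ i < n - 1, 0 < δ i := fun i hi => by have := hδ i hi; omega
  simp only [hT]
  subst hm
  refine ⟨fun Q hQ => hQ.length_ge hinj, ⟨?_, ?_⟩⟩
  · rintro ⟨p, hbij, h0, hlast, hadj⟩
    exact IsHamiltonianPath.exists_superstring ⟨hbij, h0, hlast, hadj⟩ (by omega) hper
  · rintro ⟨Q, hlen, hQ⟩
    obtain ⟨p, hp⟩ := IsTightSuperstring.exists_hamiltonianPath ⟨hQ, hlen⟩ (by omega) hinj hδ₀ hper
    exact ⟨p, hp.existsUnique, hp.map_zero, hp.map_last, hp.adj⟩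

/-- Gallant et al. reduction: every common superstring of T has length at least
2m + 3n, and G has a Hamiltonian path from s = 0 to t = n − 1 iff T has a
common superstring of length exactly 2m + 3n. -/
theorem stmt_14 (n m : ℕ) (hn : 2 ≤ n)
    (δ : ℕ → ℕ) (c : ℕ → ℕ → ℕ)
    -- every node except t has out-degree greater than 1
    (hδ : ∀ i < n - 1, 2 ≤ δ i)
    -- child indices are cyclic modulo δ(i)
    (hper : ∀ i < n - 1, ∀ j, c i (j + δ i) = c i j)
    -- children are nodes, s = 0 has no incoming edges, no self-loops
    (hrange : ∀ i < n - 1, ∀ j, c i j < n)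
    (hins : ∀ i < n - 1, ∀ j, c i j ≠ 0)
    (hloop : ∀ i < n - 1, ∀ j, c i j ≠ i)
    -- the children of a node are pairwise distinct
    (hinj : ∀ i < n - 1, ∀ j < δ i, ∀ j' < δ i, c i j = c i j' → j = j')
    -- m is the number of edges
    (hm : m = ∑ i ∈ Finset.range (n - 1), δ i) :
    let A : ℕ → ℕ → List Gam := fun i j => [ww i, vv (c i j), ww i]
    let B : ℕ → ℕ → List Gam := fun i j => [vv (c i j), ww i, vv (c i (j + 1))]
    let Cs : ℕ → List Gam := fun i =>
      if i = 0 then [dag, hash, ww 0]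
      else if i = n - 1 then [vv i, hash, dollar]
      else [vv i, hash, ww i]
    let T : Set (List Gam) :=
      {S | (∃ i < n, S = Cs i) ∨ (∃ i < n - 1, ∃ j < δ i, S = A i j ∨ S = B i j)}
    -- every common superstring of T has length at least 2m + 3n
    (∀ Q : List Gam, (∀ S ∈ T, S <:+: Q) → 2 * m + 3 * n ≤ Q.length) ∧
    -- Hamiltonian path from s to t exists iff a superstring of length 2m + 3n exists
    ((∃ p : ℕ → ℕ, (∀ x < n, ∃! k, k < n ∧ p k = x) ∧ p 0 = 0 ∧ p (n - 1) = n - 1 ∧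
        ∀ k < n - 1, ∃ j < δ (p k), c (p k) j = p (k + 1)) ↔
      (∃ Q : List Gam, Q.length = 2 * m + 3 * n ∧ ∀ S ∈ T, S <:+: Q)) :=
  stmt_14_general n m hn δ c hδ hper hinj hm
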